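/- Let p = (p_1, …, p_n) be positive integers and L(p) the abelian group generated by x_1, …, x_n subject to the relations p_1 x_1 = p_2 x_2 = … = p_n x_n, and let c := p_1 x_1. Then every element x of L(p) can be written uniquely in the form x = l·c + Σ_{i=1}^n a_i x_i with l ∈ Z and 0 ≤ a_i < p_i for all i. -/

import Mathlib

/-- The subgroup of relations `p i • x i = p j • x j` in the free abelian group on `x_1, …, x_n`. -/
noncomputable def LpRel (n : ℕ) (p : Fin n → ℕ) : AddSubgroup (Fin n →₀ ℤ) :=
  AddSubgroup.closure
    {y | ∃ i j : Fin n, y = (p i : ℤ) • Finsupp.single i 1 - (p j : ℤ) • Finsupp.single j 1}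

/-- The abelian group `L(p)` generated by `x_1, …, x_n` subject to
`p_1 x_1 = p_2 x_2 = … = p_n x_n`. -/
def Lp (n : ℕ) (p : Fin n → ℕ) : Type :=
  (Fin n →₀ ℤ) ⧸ LpRel n p

noncomputable instance (n : ℕ) (p : Fin n → ℕ) : AddCommGroup (Lp n p) :=
  QuotientAddGroup.Quotient.addCommGroup (LpRel n p)

/-- The generator `x_i` of `L(p)`. -/
noncomputable def LpGen (n : ℕ) (p : Fin n → ℕ) (i : Fin n) : Lp n p :=
  QuotientAddGroup.mk (Finsupp.single i 1)

namespace Stmt3Aux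

variable (n : ℕ) (p : Fin n → ℕ)

/-- The invariant homomorphism into `ℤ × ∏ ZMod (p i)`. -/
noncomputable def Psi : (Fin n →₀ ℤ) →+ ℤ × (∀ i, ZMod (p i)) :=
  AddMonoidHom.mk'
    (fun y => (∑ i, y i * ((∏ j, (p j : ℤ)) / p i), fun i => ((y i : ℤ) : ZMod (p i))))
    (by
      intro a b
      simp only [Prod.mk_add_mk, Prod.mk.injEq, Finsupp.add_apply]
      constructor
      · rw [← Finset.sum_add_distrib]
        exact Finset.sum_congr rfl fun i _ => by ring
      · funext i
        simp)

lemma Psi_single (i : Fin n) (c : ℤ) :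
    Psi n p (Finsupp.single i c) =
      (c * ((∏ j, (p j : ℤ)) / p i), fun k => ((if i = k then c else 0 : ℤ) : ZMod (p k))) := by
  simp only [Psi, AddMonoidHom.mk'_apply, Finsupp.single_apply, Prod.mk.injEq]
  refine ⟨?_, trivial⟩
  simp [ite_mul, Finset.sum_ite_eq]

lemma rel_le_ker : LpRel n p ≤ (Psi n p).ker := by
  rw [LpRel, AddSubgroup.closure_le]
  rintro y ⟨i, j, rfl⟩
  have hdvd : ∀ k : Fin n, (p k : ℤ) ∣ ∏ m, (p m : ℤ) :=
    fun k => Finset.dvd_prod_of_mem _ (Finset.mem_univ k)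
  simp only [SetLike.mem_coe, AddMonoidHom.mem_ker, map_sub, Finsupp.smul_single, smul_eq_mul,
    mul_one, Psi_single, Prod.mk_sub_mk, Prod.mk_eq_zero]
  constructor
  · rw [Int.mul_ediv_cancel' (hdvd i), Int.mul_ediv_cancel' (hdvd j), sub_self]
  · ext k
    simp only [Pi.sub_apply, Pi.zero_apply]
    by_cases hik : i = k <;> by_cases hjk : j = k <;>
      simp [hik, hjk, ZMod.natCast_self]

/-- The canonical-form representative in the free abelian group. -/
noncomputable def zform (hn : 0 < n) (l : ℤ) (a : Fin n → ℕ) : Fin n →₀ ℤ :=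
  l • ((p ⟨0, hn⟩ : ℤ) • Finsupp.single ⟨0, hn⟩ 1) + ∑ i, (a i : ℤ) • Finsupp.single i 1

lemma zform_apply (hn : 0 < n) (l : ℤ) (a : Fin n → ℕ) (k : Fin n) :
    zform n p hn l a k =
      l * p ⟨0, hn⟩ * (if (⟨0, hn⟩ : Fin n) = k then 1 else 0) + a k := by
  simp only [zform, Finsupp.add_apply, Finsupp.smul_apply, Finsupp.single_apply,
    Finsupp.finset_sum_apply, smul_eq_mul, mul_ite, mul_one, mul_zero, Finset.sum_ite_eq',
    Finset.mem_univ, if_true]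

lemma mk_zform (hn : 0 < n) (l : ℤ) (a : Fin n → ℕ) :
    (QuotientAddGroup.mk' (LpRel n p)) (zform n p hn l a) =
      l • ((p ⟨0, hn⟩ : ℤ) • LpGen n p ⟨0, hn⟩) + ∑ i, (a i : ℤ) • LpGen n p i := by
  simp only [zform, map_add, map_zsmul, map_sum]
  rfl

lemma exists_form (hn : 0 < n) (hp : ∀ i, 0 < p i) (y : Fin n →₀ ℤ) :
    (QuotientAddGroup.mk' (LpRel n p)) y =
      (QuotientAddGroup.mk' (LpRel n p))
        (zform n p hn (∑ i, y i / p i) fun i => (y i % p i).toNat) := by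
  rw [QuotientAddGroup.mk'_apply, QuotientAddGroup.mk'_apply, QuotientAddGroup.eq]
  have key : -y + zform n p hn (∑ i, y i / p i) (fun i => (y i % p i).toNat) =
      ∑ i, (y i / p i) •
        ((p ⟨0, hn⟩ : ℤ) • Finsupp.single ⟨0, hn⟩ 1 - (p i : ℤ) • Finsupp.single i 1) := by
    ext k
    have hnn : (((y k % p k).toNat : ℤ)) = y k % p k :=
      Int.toNat_of_nonneg (Int.emod_nonneg _ (by exact_mod_cast (hp k).ne'))
    have hdm : y k / (p k : ℤ) * p k + y k % p k = y k := by
      rw [mul_comm]; exact Int.mul_ediv_add_emod _ _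
    simp only [Finsupp.add_apply, Finsupp.coe_neg, Pi.neg_apply, zform_apply,
      Finsupp.finset_sum_apply, Finsupp.smul_apply, Finsupp.sub_apply, Finsupp.single_apply,
      smul_eq_mul, mul_sub, mul_ite, mul_one, mul_zero, Finset.sum_sub_distrib,
      Finset.sum_ite_eq', Finset.mem_univ, if_true, ← Finset.sum_mul]
    rw [hnn]
    split_ifs with h <;>
      simp only [Finset.sum_mul, Finset.sum_const_zero] <;> linarith [hdm]
  rw [key, LpRel]
  refine sum_mem fun i _ => AddSubgroup.zsmul_mem _ (AddSubgroup.subset_closure ?_) _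
  exact ⟨⟨0, hn⟩, i, rfl⟩

lemma Psi_zform (hn : 0 < n) (l : ℤ) (a : Fin n → ℕ) :
    Psi n p (zform n p hn l a) =
      (l * ∏ j, (p j : ℤ) + ∑ i, (a i : ℤ) * ((∏ j, (p j : ℤ)) / p i),
        fun i => ((a i : ℤ) : ZMod (p i))) := by
  have hdvd : ∀ k : Fin n, (p k : ℤ) ∣ ∏ m, (p m : ℤ) :=
    fun k => Finset.dvd_prod_of_mem _ (Finset.mem_univ k)
  simp only [Psi, AddMonoidHom.mk'_apply, zform_apply, Prod.mk.injEq]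
  constructor
  · simp only [add_mul, Finset.sum_add_distrib]
    congr 1
    simp only [ite_mul, mul_ite, mul_one, mul_zero, zero_mul, one_mul, Finset.sum_ite_eq,
      Finset.mem_univ, if_true]
    rw [mul_assoc, Int.mul_ediv_cancel' (hdvd _)]
  · funext k
    by_cases h : (⟨0, hn⟩ : Fin n) = k
    · subst h
      push_cast [ZMod.natCast_self]
      ring
    · simp [h]

end Stmt3Aux

/-- Every element of `L(p)` can be written uniquely in canonical form
`x = l • c + ∑ i, a i • x i` with `l ∈ ℤ` and `0 ≤ a i < p i` for all `i`,
where `c = p 0 • x 0` (`= p i • x i` for every `i`). -/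
theorem stmt3 (n : ℕ) (hn : 0 < n) (p : Fin n → ℕ) (hp : ∀ i, 0 < p i) (x : Lp n p) :
    ∃! la : ℤ × (Fin n → ℕ), (∀ i, la.2 i < p i) ∧
      x = la.1 • ((p ⟨0, hn⟩ : ℤ) • LpGen n p ⟨0, hn⟩) + ∑ i, (la.2 i : ℤ) • LpGen n p i := by
  obtain ⟨y, rfl⟩ := QuotientAddGroup.mk'_surjective (LpRel n p) x
  set l : ℤ := ∑ i, y i / p i with hl
  set a : Fin n → ℕ := fun i => (y i % p i).toNat with ha
  have hPpos : (0 : ℤ) < ∏ j, (p j : ℤ) :=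
    Finset.prod_pos fun j _ => by exact_mod_cast hp j
  refine ⟨(l, a), ⟨?_, ?_⟩, ?_⟩
  · intro i
    have h1 : (((y i % p i).toNat : ℤ)) = y i % p i :=
      Int.toNat_of_nonneg (Int.emod_nonneg _ (by exact_mod_cast (hp i).ne'))
    have h2 : y i % p i < p i := Int.emod_lt_of_pos _ (by exact_mod_cast hp i)
    have : ((a i : ℤ)) < p i := by rw [ha]; simpa [h1] using h2
    exact_mod_cast this
  · rw [Stmt3Aux.exists_form n p hn hp y, Stmt3Aux.mk_zform]
  · rintro ⟨l', a'⟩ ⟨hb, heq⟩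
    have heq2 : (QuotientAddGroup.mk' (LpRel n p)) (Stmt3Aux.zform n p hn l' a') =
        (QuotientAddGroup.mk' (LpRel n p)) (Stmt3Aux.zform n p hn l a) := by
      rw [Stmt3Aux.mk_zform, Stmt3Aux.mk_zform, ← heq,
        Stmt3Aux.exists_form n p hn hp y, Stmt3Aux.mk_zform]
    have hker : Stmt3Aux.Psi n p (Stmt3Aux.zform n p hn l' a') =
        Stmt3Aux.Psi n p (Stmt3Aux.zform n p hn l a) := by
      have hmem : -(Stmt3Aux.zform n p hn l' a') + Stmt3Aux.zform n p hn l a ∈ LpRel n p := by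
        rwa [QuotientAddGroup.mk'_apply, QuotientAddGroup.mk'_apply, QuotientAddGroup.eq]
          at heq2
      have := Stmt3Aux.rel_le_ker n p hmem
      rw [AddMonoidHom.mem_ker, map_add, map_neg, neg_add_eq_zero] at this
      exact this
    rw [Stmt3Aux.Psi_zform, Stmt3Aux.Psi_zform, Prod.mk.injEq] at hker
    obtain ⟨h1, h2⟩ := hker
    have ha' : a' = a := by
      funext i
      have hcast : ((a' i : ℤ) : ZMod (p i)) = ((a i : ℤ) : ZMod (p i)) := congrFun h2 i
      haveI : NeZero (p i) := ⟨(hp i).ne'⟩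
      push_cast at hcast
      have hva : ((a' i : ZMod (p i))).val = ((a i : ZMod (p i))).val := by rw [hcast]
      rwa [ZMod.val_cast_of_lt (hb i), ZMod.val_cast_of_lt (by
        -- a i < p i, proven above; reprove
        have h1' : (((y i % p i).toNat : ℤ)) = y i % p i :=
          Int.toNat_of_nonneg (Int.emod_nonneg _ (by exact_mod_cast (hp i).ne'))
        have h2' : y i % p i < p i := Int.emod_lt_of_pos _ (by exact_mod_cast hp i)
        have : ((a i : ℤ)) < p i := by rw [ha]; simpa [h1'] using h2'
        exact_mod_cast this)] at hva
    have hl' : l' = l := by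
      rw [ha'] at h1
      have := add_right_cancel h1
      exact mul_right_cancel₀ hPpos.ne' this
    rw [Prod.mk.injEq]
    exact ⟨hl', ha'⟩
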